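/- arXiv:2008.08079 — 3 statements merged into one kernel-verified Lean document; each statement's English description precedes it below -/
import Mathlib

section
/- Let K be the least natural number with q^{K+1} ≤ 1/4. Then for all n ∈ ℕ₀ and all k ∈ ℕ₀ with k ≥ K: [b_{n+k+1} − P_1(1−q^n)] · [b_{n+k+2} − P_1(1−q^n)] / ( a_{n+k+1} · c_{n+k+2} ) > 4. -/
open scoped BigOperators

/-- Recurrence coefficient `a_n` of the little q-Legendre polynomials. -/
noncomputable def aC (q : ℝ) : ℕ → ℝ
  | 0 => 1 / (q + 1)
  | n + 1 => q ^ (n + 1) * (1 + q) * (1 - q ^ (n + 2)) /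
      ((1 - q ^ (2 * n + 3)) * (1 + q ^ (n + 2)))

/-- Recurrence coefficient `c_n` of the little q-Legendre polynomials. -/
noncomputable def cC (q : ℝ) : ℕ → ℝ
  | 0 => 0
  | n + 1 => q ^ (n + 1) * (1 + q) * (1 - q ^ (n + 1)) /
      ((1 - q ^ (2 * n + 3)) * (1 + q ^ (n + 1)))

/-- Recurrence coefficient `b_n = 1 - a_n - c_n`. -/
noncomputable def bC (q : ℝ) (n : ℕ) : ℝ := 1 - aC q n - cC q n

/-- The little q-Legendre polynomials, as functions `ℝ → ℝ`:
`P 0 x = 1`, `P 1 x = (q+1)x - q`, and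
`P 1 x * P (n+1) x = a_{n+1} P (n+2) x + b_{n+1} P (n+1) x + c_{n+1} P n x`. -/
noncomputable def P (q : ℝ) : ℕ → ℝ → ℝ
  | 0, _ => 1
  | 1, x => (q + 1) * x - q
  | n + 2, x =>
      (((q + 1) * x - q) * P q (n + 1) x - bC q (n + 1) * P q (n + 1) x
        - cC q (n + 1) * P q n x) / aC q (n + 1)

/-- Haar weights of the little q-Legendre hypergroup. -/
noncomputable def haar (q : ℝ) (n : ℕ) : ℝ := (1 - q ^ (2 * n + 1)) / (q ^ n * (1 - q))

/-- Finite q-Pochhammer symbol `(a;q)_m`. -/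
noncomputable def qpoch (q A : ℝ) (m : ℕ) : ℝ := ∏ j ∈ Finset.range m, (1 - A * q ^ j)

/-- Infinite q-Pochhammer symbol `(a;q)_∞`. -/
noncomputable def qpochInf (q A : ℝ) : ℝ := ∏' j : ℕ, (1 - A * q ^ j)

lemma aC_succ (q : ℝ) (n : ℕ) : aC q (n+1) = q ^ (n + 1) * (1 + q) * (1 - q ^ (n + 2)) /
      ((1 - q ^ (2 * n + 3)) * (1 + q ^ (n + 2))) := rfl

lemma cC_succ (q : ℝ) (n : ℕ) : cC q (n+1) = q ^ (n + 1) * (1 + q) * (1 - q ^ (n + 1)) /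
      ((1 - q ^ (2 * n + 3)) * (1 + q ^ (n + 1))) := rfl

lemma aC_pos (q : ℝ) (hq0 : 0 < q) (hq1 : q < 1) (n : ℕ) : 0 < aC q (n+1) := by
  rw [aC_succ]
  have h1 : q ^ (2*n+3) < 1 := pow_lt_one₀ hq0.le hq1 (by omega)
  have h2 : q ^ (n+2) < 1 := pow_lt_one₀ hq0.le hq1 (by omega)
  have h3 : 0 < q ^ (n+1) := pow_pos hq0 _
  have h4 : 0 < q ^ (n+2) := pow_pos hq0 _
  apply div_pos
  · apply mul_pos (mul_pos h3 (by linarith)); linarith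
  · apply mul_pos <;> linarith

lemma cC_pos (q : ℝ) (hq0 : 0 < q) (hq1 : q < 1) (n : ℕ) : 0 < cC q (n+1) := by
  rw [cC_succ]
  have h1 : q ^ (2*n+3) < 1 := pow_lt_one₀ hq0.le hq1 (by omega)
  have h2 : q ^ (n+1) < 1 := pow_lt_one₀ hq0.le hq1 (by omega)
  have h3 : 0 < q ^ (n+1) := pow_pos hq0 _
  apply div_pos
  · apply mul_pos (mul_pos h3 (by linarith)); linarith
  · apply mul_pos <;> linarith

lemma aC_le (q : ℝ) (hq0 : 0 < q) (hq1 : q < 1) (n : ℕ) :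
    aC q (n+1) ≤ (1+q) * q ^ (n+1) := by
  rw [aC_succ]
  have h1 : q ^ (2*n+3) < 1 := pow_lt_one₀ hq0.le hq1 (by omega)
  have h2 : q ^ (n+2) < 1 := pow_lt_one₀ hq0.le hq1 (by omega)
  have h3 : 0 < q ^ (n+1) := pow_pos hq0 _
  have h4 : 0 < q ^ (n+2) := pow_pos hq0 _
  have h5 : q ^ (2*n+3) ≤ q ^ (n+2) := pow_le_pow_of_le_one hq0.le hq1.le (by omega)
  have hD : 0 < (1 - q ^ (2*n+3)) * (1 + q ^ (n+2)) := by
    apply mul_pos <;> linarith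
  have hfrac : (1 - q ^ (n+2)) / ((1 - q ^ (2*n+3)) * (1 + q ^ (n+2))) ≤ 1 := by
    rw [div_le_one hD]
    nlinarith [mul_le_of_le_one_left h4.le h1.le]
  calc q ^ (n + 1) * (1 + q) * (1 - q ^ (n + 2)) / ((1 - q ^ (2 * n + 3)) * (1 + q ^ (n + 2)))
      = (q ^ (n+1) * (1 + q)) * ((1 - q ^ (n+2)) / ((1 - q ^ (2*n+3)) * (1 + q ^ (n+2)))) := by
        ring
    _ ≤ (q ^ (n+1) * (1 + q)) * 1 := by
        apply mul_le_mul_of_nonneg_left hfrac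
        positivity
    _ ≤ (1+q) * q ^ (n+1) := by ring_nf; rfl

lemma cC_le (q : ℝ) (hq0 : 0 < q) (hq1 : q < 1) (n : ℕ) :
    cC q (n+1) ≤ (1+q) * q ^ (n+1) := by
  rw [cC_succ]
  have h1 : q ^ (2*n+3) < 1 := pow_lt_one₀ hq0.le hq1 (by omega)
  have h2 : q ^ (n+1) < 1 := pow_lt_one₀ hq0.le hq1 (by omega)
  have h3 : 0 < q ^ (n+1) := pow_pos hq0 _
  have h5 : q ^ (2*n+3) ≤ q ^ (n+1) := pow_le_pow_of_le_one hq0.le hq1.le (by omega)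
  have hD : 0 < (1 - q ^ (2*n+3)) * (1 + q ^ (n+1)) := by
    apply mul_pos <;> linarith
  have hfrac : (1 - q ^ (n+1)) / ((1 - q ^ (2*n+3)) * (1 + q ^ (n+1))) ≤ 1 := by
    rw [div_le_one hD]
    nlinarith [mul_le_of_le_one_left h3.le h1.le]
  calc q ^ (n + 1) * (1 + q) * (1 - q ^ (n + 1)) / ((1 - q ^ (2 * n + 3)) * (1 + q ^ (n + 1)))
      = (q ^ (n+1) * (1 + q)) * ((1 - q ^ (n+1)) / ((1 - q ^ (2*n+3)) * (1 + q ^ (n+1)))) := by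
        ring
    _ ≤ (q ^ (n+1) * (1 + q)) * 1 := by
        apply mul_le_mul_of_nonneg_left hfrac
        positivity
    _ ≤ (1+q) * q ^ (n+1) := by ring_nf; rfl
/-- for all `n` and `k ≥ K`:
`[b_{n+k+1} - P₁(1-qⁿ)][b_{n+k+2} - P₁(1-qⁿ)] / (a_{n+k+1} c_{n+k+2}) > 4`. -/
theorem stmt7 (q : ℝ) (hq0 : 0 < q) (hq1 : q < 1) (K : ℕ)
    (hK : q ^ (K + 1) ≤ 1 / 4) (hKleast : ∀ m : ℕ, m < K → ¬ (q ^ (m + 1) ≤ 1 / 4)) :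
    ∀ n k : ℕ, K ≤ k →
      (bC q (n + k + 1) - P q 1 (1 - q ^ n)) * (bC q (n + k + 2) - P q 1 (1 - q ^ n)) /
        (aC q (n + k + 1) * cC q (n + k + 2)) > 4 := by
  intro n k hk
  have hP : P q 1 (1 - q ^ n) = 1 - (q + 1) * q ^ n := by
    show (q + 1) * (1 - q ^ n) - q = _
    ring
  have hqn : (0:ℝ) < q ^ n := pow_pos hq0 n
  have h1q : (0:ℝ) < 1 + q := by linarith
  -- coefficient bounds
  have ha1pos : 0 < aC q (n + k + 1) := aC_pos q hq0 hq1 (n + k)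
  have hc1pos : 0 < cC q (n + k + 1) := cC_pos q hq0 hq1 (n + k)
  have ha2pos : 0 < aC q (n + k + 2) := aC_pos q hq0 hq1 (n + k + 1)
  have hc2pos : 0 < cC q (n + k + 2) := cC_pos q hq0 hq1 (n + k + 1)
  have ha1le : aC q (n + k + 1) ≤ (1 + q) * q ^ (n + k + 1) := aC_le q hq0 hq1 (n + k)
  have hc1le : cC q (n + k + 1) ≤ (1 + q) * q ^ (n + k + 1) := cC_le q hq0 hq1 (n + k)
  have ha2le : aC q (n + k + 2) ≤ (1 + q) * q ^ (n + k + 2) := aC_le q hq0 hq1 (n + k + 1)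
  have hc2le : cC q (n + k + 2) ≤ (1 + q) * q ^ (n + k + 2) := cC_le q hq0 hq1 (n + k + 1)
  -- smallness of q powers
  have hs1 : q ^ (n + k + 1) ≤ q ^ n / 4 := by
    have e : q ^ (n + k + 1) = q ^ n * q ^ (k + 1) := by
      ring
    have h2 : q ^ (k + 1) ≤ q ^ (K + 1) :=
      pow_le_pow_of_le_one hq0.le hq1.le (by omega)
    calc q ^ (n + k + 1) = q ^ n * q ^ (k + 1) := e
      _ ≤ q ^ n * (1 / 4) := by
          apply mul_le_mul_of_nonneg_left (h2.trans hK) hqn.le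
      _ = q ^ n / 4 := by ring
  have hs2 : q ^ (n + k + 2) ≤ q ^ n / 4 * q := by
    have e : q ^ (n + k + 2) = q ^ (n + k + 1) * q := by rw [pow_succ]
    rw [e]
    exact mul_le_mul_of_nonneg_right hs1 hq0.le
  have hs2' : q ^ (n + k + 2) ≤ q ^ n / 4 := by
    nlinarith
  -- numerator factor bounds
  have hb1 : (1 + q) * q ^ n / 2 ≤ bC q (n + k + 1) - P q 1 (1 - q ^ n) := by
    rw [hP, bC]
    nlinarith [mul_le_mul_of_nonneg_left hs1 h1q.le]
  have hb2 : (1 + q) * q ^ n / 2 ≤ bC q (n + k + 2) - P q 1 (1 - q ^ n) := by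
    rw [hP, bC]
    nlinarith [mul_le_mul_of_nonneg_left hs2' h1q.le]
  have hL : (0:ℝ) < (1 + q) * q ^ n / 2 := by positivity
  -- denominator bounds
  have haB : aC q (n + k + 1) ≤ (1 + q) * (q ^ n / 4) :=
    ha1le.trans (mul_le_mul_of_nonneg_left hs1 h1q.le)
  have hcB : cC q (n + k + 2) ≤ (1 + q) * (q ^ n / 4) * q := by
    refine hc2le.trans ?_
    calc (1 + q) * q ^ (n + k + 2) ≤ (1 + q) * (q ^ n / 4 * q) :=
          mul_le_mul_of_nonneg_left hs2 h1q.le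
      _ = (1 + q) * (q ^ n / 4) * q := by ring
  have hdenpos : 0 < aC q (n + k + 1) * cC q (n + k + 2) := mul_pos ha1pos hc2pos
  rw [gt_iff_lt, lt_div_iff₀ hdenpos]
  have hnum : ((1 + q) * q ^ n / 2) * ((1 + q) * q ^ n / 2) ≤
      (bC q (n + k + 1) - P q 1 (1 - q ^ n)) * (bC q (n + k + 2) - P q 1 (1 - q ^ n)) :=
    mul_le_mul hb1 hb2 hL.le (by linarith)
  have hden : aC q (n + k + 1) * cC q (n + k + 2) ≤
      ((1 + q) * (q ^ n / 4)) * ((1 + q) * (q ^ n / 4) * q) :=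
    mul_le_mul haB hcB hc2pos.le (by positivity)
  nlinarith [sq_nonneg ((1 + q) * q ^ n), mul_pos (mul_pos h1q hqn) (mul_pos h1q hqn)]
end

section
/- For all n, k ∈ ℕ₀: ( b_{n+k+1} − P_1(1−q^n) ) / a_{n+k+1} > q^{−(k+1)} − 2. -/
open scoped BigOperators

/-! With `m = n + k + 1`, the quotient equals `(1 + q) qⁿ / a_m - 1 - c_m / a_m`. Both `a_m < (1 + q) q^m`
and `c_m < a_m` hold, the latter because `t ↦ (1 - t) / (1 + t)` is decreasing; hence the first term exceeds
`q^{-(k+1)}` and the remaining two exceed `-2`. -/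

lemma one_sub_div_one_add_lt_of_lt {s t : ℝ} (hs : 0 ≤ s) (hst : s < t) :
    (1 - t) / (1 + t) < (1 - s) / (1 + s) := by
  rw [div_lt_div_iff₀ (by linarith) (by linarith)]
  nlinarith

lemma aC_succ_eq_mul (q : ℝ) (j : ℕ) :
    aC q (j + 1) = q ^ (j + 1) * (1 + q) / (1 - q ^ (2 * j + 3)) *
      ((1 - q ^ (j + 2)) / (1 + q ^ (j + 2))) := by
  rw [aC, div_mul_div_comm]

lemma cC_succ_eq_mul (q : ℝ) (j : ℕ) :
    cC q (j + 1) = q ^ (j + 1) * (1 + q) / (1 - q ^ (2 * j + 3)) *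
      ((1 - q ^ (j + 1)) / (1 + q ^ (j + 1))) := by
  rw [cC, div_mul_div_comm]

section

variable {q : ℝ}

lemma aC_succ_pos (hq0 : 0 < q) (hq1 : q < 1) (j : ℕ) : 0 < aC q (j + 1) := by
  have hnum : 0 < 1 - q ^ (j + 2) := sub_pos.2 (pow_lt_one₀ hq0.le hq1 (by omega))
  have hden : 0 < 1 - q ^ (2 * j + 3) := sub_pos.2 (pow_lt_one₀ hq0.le hq1 (by omega))
  rw [aC]
  positivity

lemma cC_succ_lt_aC_succ (hq0 : 0 < q) (hq1 : q < 1) (j : ℕ) : cC q (j + 1) < aC q (j + 1) := by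
  have hden : 0 < 1 - q ^ (2 * j + 3) := sub_pos.2 (pow_lt_one₀ hq0.le hq1 (by omega))
  rw [aC_succ_eq_mul, cC_succ_eq_mul]
  refine mul_lt_mul_of_pos_left (one_sub_div_one_add_lt_of_lt (by positivity) ?_) (by positivity)
  exact pow_lt_pow_right_of_lt_one₀ hq0 hq1 (by omega)

lemma aC_succ_lt (hq0 : 0 < q) (hq1 : q < 1) (j : ℕ) :
    aC q (j + 1) < (1 + q) * q ^ (j + 1) := by
  have hu : q ^ (j + 2) < 1 := pow_lt_one₀ hq0.le hq1 (by omega)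
  have hvu : q ^ (2 * j + 3) < q ^ (j + 2) := pow_lt_pow_right_of_lt_one₀ hq0 hq1 (by omega)
  have hv : 0 < q ^ (2 * j + 3) := by positivity
  have hfactor : (1 - q ^ (j + 2)) / ((1 - q ^ (2 * j + 3)) * (1 + q ^ (j + 2))) < 1 := by
    rw [div_lt_one (by nlinarith)]
    nlinarith
  calc aC q (j + 1)
      = (1 + q) * q ^ (j + 1) *
          ((1 - q ^ (j + 2)) / ((1 - q ^ (2 * j + 3)) * (1 + q ^ (j + 2)))) := by
        rw [aC, mul_div_assoc', mul_comm (1 + q)]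
    _ < (1 + q) * q ^ (j + 1) := mul_lt_of_lt_one_right (by positivity) hfactor

end

lemma bC_sub_P_one_one_sub_pow (q : ℝ) (m n : ℕ) :
    bC q m - P q 1 (1 - q ^ n) = (1 + q) * q ^ n - aC q m - cC q m := by
  rw [bC, P]
  ring

/-- for all `n, k`: `(b_{n+k+1} - P₁(1-qⁿ)) / a_{n+k+1} > q^{-(k+1)} - 2`. -/
theorem stmt9 (q : ℝ) (hq0 : 0 < q) (hq1 : q < 1) :
    ∀ n k : ℕ,
      (bC q (n + k + 1) - P q 1 (1 - q ^ n)) / aC q (n + k + 1) > (q ^ (k + 1))⁻¹ - 2 := by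
  intro n k
  have ha := aC_succ_pos hq0 hq1 (n + k)
  have hmain : (q ^ (k + 1))⁻¹ < (1 + q) * q ^ n / aC q (n + k + 1) := by
    rw [inv_eq_one_div, div_lt_div_iff₀ (by positivity) ha, one_mul,
      mul_assoc, ← pow_add, show n + (k + 1) = n + k + 1 by ring]
    exact aC_succ_lt hq0 hq1 (n + k)
  have hratio : cC q (n + k + 1) / aC q (n + k + 1) < 1 :=
    (div_lt_one ha).2 (cC_succ_lt_aC_succ hq0 hq1 (n + k))
  have hsplit : (bC q (n + k + 1) - P q 1 (1 - q ^ n)) / aC q (n + k + 1) =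
      (1 + q) * q ^ n / aC q (n + k + 1) - 1 - cC q (n + k + 1) / aC q (n + k + 1) := by
    rw [bC_sub_P_one_one_sub_pow, sub_div, sub_div, div_self ha.ne']
  rw [hsplit]
  linarith
end

section
/- For every n ∈ ℕ₀: ∑_{k=0}^n h(k) = (1/(1−q)) · [ 1 − q^{n+1}(2 − q^n − q^{n+1})/(1 − q^{2n+1}) ] · h(n), and this quantity is strictly less than h(n)/(1−q). -/
open scoped BigOperators

/-!
Since `h(k) = (q⁻ᵏ - q^(k+1)) / (1 - q)`, the partial sums are geometric and equal
`(1 - q^(n+1))² / ((1 - q)² qⁿ)`. The identity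
`(1 - q^(n+1))² = (1 - q^(2n+1)) - q^(n+1)(2 - qⁿ - q^(n+1))` shows that the bracketed expression
times `h(n) / (1 - q)` is this same closed form, and the bracket is below `1` because the
subtracted correction term is positive for `0 < q < 1`.
-/

theorem sum_range_haar {q : ℝ} (hq0 : q ≠ 0) (hq1 : q ≠ 1) (n : ℕ) :
    ∑ k ∈ Finset.range (n + 1), haar q k = (1 - q ^ (n + 1)) ^ 2 / ((1 - q) ^ 2 * q ^ n) := by
  have h1 : 1 - q ≠ 0 := sub_ne_zero.mpr hq1.symm
  induction n with
  | zero => rw [zero_add, Finset.sum_range_one, haar]; field_simp; ring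
  | succ n ih => rw [Finset.sum_range_succ, ih, haar]; field_simp; ring

theorem haar_pos {q : ℝ} (hq0 : 0 < q) (hq1 : q < 1) (n : ℕ) : 0 < haar q n :=
  div_pos (sub_pos.mpr (pow_lt_one₀ hq0.le hq1 (by omega)))
    (mul_pos (pow_pos hq0 n) (sub_pos.mpr hq1))

theorem one_sub_pow_succ_sq {R : Type*} [CommRing R] (q : R) (n : ℕ) :
    (1 - q ^ (n + 1)) ^ 2 = 1 - q ^ (2 * n + 1) - q ^ (n + 1) * (2 - q ^ n - q ^ (n + 1)) := by
  ring

theorem one_div_mul_bracket_mul_haar {q : ℝ} {n : ℕ} (hq0 : q ≠ 0) (hq1 : q ≠ 1)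
    (hq : q ^ (2 * n + 1) ≠ 1) :
    (1 / (1 - q)) * (1 - q ^ (n + 1) * (2 - q ^ n - q ^ (n + 1)) / (1 - q ^ (2 * n + 1))) *
      haar q n = (1 - q ^ (n + 1)) ^ 2 / ((1 - q) ^ 2 * q ^ n) := by
  have h1 : 1 - q ≠ 0 := sub_ne_zero.mpr hq1.symm
  have h2 : 1 - q ^ (2 * n + 1) ≠ 0 := sub_ne_zero.mpr hq.symm
  rw [haar, one_sub_pow_succ_sq]
  field_simp

/-- partial sums of the Haar weights:
`∑_{k=0}^n h(k) = (1/(1-q))[1 - q^{n+1}(2-qⁿ-q^{n+1})/(1-q^{2n+1})] h(n) < h(n)/(1-q)`. -/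
theorem stmt11 (q : ℝ) (hq0 : 0 < q) (hq1 : q < 1) (n : ℕ) :
    (∑ k ∈ Finset.range (n + 1), haar q k) =
      (1 / (1 - q)) * (1 - q ^ (n + 1) * (2 - q ^ n - q ^ (n + 1)) / (1 - q ^ (2 * n + 1))) *
        haar q n ∧
    (1 / (1 - q)) * (1 - q ^ (n + 1) * (2 - q ^ n - q ^ (n + 1)) / (1 - q ^ (2 * n + 1))) *
        haar q n < haar q n / (1 - q) := by
  have hodd : q ^ (2 * n + 1) < 1 := pow_lt_one₀ hq0.le hq1 (by omega)
  refine ⟨by rw [sum_range_haar hq0.ne' hq1.ne, one_div_mul_bracket_mul_haar hq0.ne' hq1.ne hodd.ne], ?_⟩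
  have hcorr : 0 < q ^ (n + 1) * (2 - q ^ n - q ^ (n + 1)) / (1 - q ^ (2 * n + 1)) := by
    have : q ^ n ≤ 1 := pow_le_one₀ hq0.le hq1.le
    have : q ^ (n + 1) < 1 := pow_lt_one₀ hq0.le hq1 (by omega)
    exact div_pos (mul_pos (pow_pos hq0 _) (by linarith)) (by linarith)
  have : 0 < 1 / (1 - q) := one_div_pos.mpr (sub_pos.mpr hq1)
  have := haar_pos hq0 hq1 n
  calc _ < 1 / (1 - q) * 1 * haar q n := by gcongr; linarith
    _ = haar q n / (1 - q) := by ring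
end
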